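/- For every x ∈ ℂ with |x| ≥ 1, the integral over the open unit disk of log|x − y| with respect to planar Lebesgue measure in y satisfies ∫_𝔻 log|x − y| dy = π·log|x|. -/

import Mathlib

open Metric MeasureTheory Set

/-- `-log t ≤ 2 t^(-1/2)` for `0 < t`. -/
lemma neg_log_le_rpow {t : ℝ} (h0 : 0 < t) : -Real.log t ≤ 2 * t ^ (-(2:ℝ)⁻¹) := by
  have h1 : Real.log (t ^ (-(2:ℝ)⁻¹)) = (-(2:ℝ)⁻¹) * Real.log t := Real.log_rpow h0 _
  have h2 : Real.log (t ^ (-(2:ℝ)⁻¹)) ≤ t ^ (-(2:ℝ)⁻¹) - 1 :=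
    Real.log_le_sub_one_of_pos (Real.rpow_pos_of_pos h0 _)
  nlinarith [Real.rpow_pos_of_pos h0 (-(2:ℝ)⁻¹)]

/-- Circle average of `log |x - ·|` over a circle of radius `r < 1 ≤ |x|`. -/
lemma circleAvg (x : ℂ) (hx : 1 ≤ ‖x‖) {r : ℝ} (hr0 : 0 < r) (hr1 : r < 1) :
    ∫ θ in (0:ℝ)..(2*Real.pi), Real.log (‖x - circleMap 0 r θ‖) =
      2 * Real.pi * Real.log (‖x‖) := by
  have hx0 : x ≠ 0 := by
    intro h; rw [h] at hx; simp at hx; linarith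
  set g : ℂ → ℂ := fun z => Complex.log (1 - z / x) with hg
  have habs : ∀ z : ℂ, ‖z‖ ≤ r → ‖z / x‖ < 1 := by
    intro z hz
    rw [norm_div]
    have h1 : ‖z‖ / ‖x‖ ≤ r / 1 :=
      div_le_div₀ hr0.le hz one_pos hx
    simpa using h1.trans_lt (by simpa using hr1)
  have hne : ∀ z : ℂ, ‖z‖ ≤ r → (1 - z / x) ∈ Complex.slitPlane := by
    intro z hz
    rw [Complex.mem_slitPlane_iff]
    left
    have h2 : (z / x).re ≤ ‖z / x‖ := Complex.re_le_norm _
    have h3 := habs z hz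
    simp only [Complex.sub_re, Complex.one_re]
    linarith
  have hd : DifferentiableOn ℂ g (closedBall 0 r) := by
    intro z hz
    have hz' : ‖z‖ ≤ r := by
      simpa [Complex.dist_eq] using (mem_closedBall.1 hz)
    exact ((Complex.differentiableAt_log (hne z hz')).comp z
      ((differentiableAt_const _).sub (differentiableAt_id.div_const x))).differentiableWithinAt
  have key := hd.circleIntegral_sub_inv_smul (mem_ball_self hr0)
  have hg0 : g 0 = 0 := by simp [hg]
  rw [hg0, smul_zero] at key
  have hmap_ne : ∀ θ : ℝ, circleMap 0 r θ ≠ 0 := fun θ => circleMap_ne_center hr0.ne'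
  have hz' : ∀ θ : ℝ, ‖circleMap 0 r θ‖ ≤ r := fun θ => by
    rw [norm_circleMap_zero, abs_of_pos hr0]
  have hcont : Continuous fun θ : ℝ => g (circleMap 0 r θ) := by
    apply continuous_iff_continuousAt.mpr
    intro θ
    have h1 : ContinuousAt (fun θ : ℝ => 1 - circleMap 0 r θ / x) θ := by fun_prop
    have h2 : ContinuousAt Complex.log (1 - circleMap 0 r θ / x) :=
      continuousAt_clog (hne _ (hz' θ))
    have h3 : ContinuousAt (fun θ : ℝ => Complex.log (1 - circleMap 0 r θ / x)) θ :=
      ContinuousAt.comp (f := fun θ : ℝ => 1 - circleMap 0 r θ / x) (x := θ) h2 h1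
    simpa [hg] using h3
  have hint : ∫ θ in (0:ℝ)..(2*Real.pi), g (circleMap 0 r θ) = 0 := by
    have heq : (∮ z in C(0, r), (z - 0)⁻¹ • g z)
        = ∫ θ in (0:ℝ)..(2*Real.pi), Complex.I * g (circleMap 0 r θ) := by
      simp only [circleIntegral, deriv_circleMap, smul_eq_mul, sub_zero]
      apply intervalIntegral.integral_congr
      intro θ _
      field_simp [hmap_ne θ]
    rw [heq, intervalIntegral.integral_const_mul] at key
    simpa [Complex.I_ne_zero] using key
  have hdecomp : ∀ θ : ℝ, Real.log (‖x - circleMap 0 r θ‖)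
      = Real.log (‖x‖) + (g (circleMap 0 r θ)).re := by
    intro θ
    have hw := hz' θ
    have hne0 : (1 - circleMap 0 r θ / x) ≠ 0 := Complex.slitPlane_ne_zero (hne _ hw)
    have hxw : x - circleMap 0 r θ = x * (1 - circleMap 0 r θ / x) := by
      field_simp
    rw [hxw, norm_mul, Real.log_mul (norm_ne_zero_iff.mpr hx0) (norm_ne_zero_iff.mpr hne0)]
    congr 1
    exact (Complex.log_re _).symm
  have hcontre : Continuous fun θ : ℝ => (g (circleMap 0 r θ)).re :=
    Complex.continuous_re.comp hcont
  calc ∫ θ in (0:ℝ)..(2*Real.pi), Real.log (‖x - circleMap 0 r θ‖)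
      = ∫ θ in (0:ℝ)..(2*Real.pi),
          (Real.log (‖x‖) + (g (circleMap 0 r θ)).re) :=
        intervalIntegral.integral_congr (fun θ _ => hdecomp θ)
    _ = 2 * Real.pi * Real.log (‖x‖) := by
        rw [intervalIntegral.integral_add (intervalIntegrable_const)
          (hcontre.intervalIntegrable (μ := volume) _ _)]
        have h2 : ∫ θ in (0:ℝ)..(2*Real.pi), (g (circleMap 0 r θ)).re = 0 := by
          have := Complex.reCLM.intervalIntegral_comp_comm
            (hcont.intervalIntegrable (μ := volume) (0:ℝ) (2*Real.pi))
          simp only [Complex.reCLM_apply] at this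
          rw [this, hint]
          simp
        rw [h2, add_zero, intervalIntegral.integral_const, smul_eq_mul]
        ring

/-- For `|x| ≥ 1`, `∫_𝔻 log|x − y| dy = π·log|x|`. -/
theorem stmt4 (x : ℂ) (hx : 1 ≤ ‖x‖) :
    ∫ y in ball (0 : ℂ) 1, Real.log (‖x - y‖) =
      Real.pi * Real.log (‖x‖) := by
  have hπ : (0:ℝ) < Real.pi := Real.pi_pos
  set T : Set (ℝ × ℝ) := (Ioo (0:ℝ) 1) ×ˢ (Ioo (-Real.pi) Real.pi) with hT
  set F : ℝ × ℝ → ℝ :=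
    fun p => p.1 * Real.log (‖x - Complex.polarCoord.symm p‖) with hF
  set μ : Measure ℝ := volume.restrict (Ioo (0:ℝ) 1) with hμ
  set ν : Measure ℝ := volume.restrict (Ioo (-Real.pi) Real.pi) with hν
  -- measurability of F
  have hFmeas : Measurable F := by
    apply measurable_fst.mul
    apply Real.measurable_log.comp
    have hsymm : Continuous fun p : ℝ × ℝ => (Complex.polarCoord.symm p : ℂ) := by
      have he : (fun p : ℝ × ℝ => (Complex.polarCoord.symm p : ℂ))
          = fun p : ℝ × ℝ => (p.1 : ℂ) * (Real.cos p.2 + Real.sin p.2 * Complex.I) := by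
        funext p
        exact Complex.polarCoord_symm_apply p
      rw [he]
      fun_prop
    exact (continuous_norm.comp (continuous_const.sub hsymm)).measurable
  -- pointwise bound on the log
  have hbound : ∀ r ∈ Ioo (0:ℝ) 1, ∀ θ : ℝ,
      |Real.log (‖x - Complex.polarCoord.symm (r, θ)‖)|
        ≤ -Real.log (1 - r) + Real.log (‖x‖ + 1) := by
    intro r hr θ
    set w := Complex.polarCoord.symm (r, θ) with hw
    have hwabs : ‖w‖ = r := by
      rw [hw, Complex.norm_polarCoord_symm, abs_of_pos hr.1]
    have hlow : 1 - r ≤ ‖x - w‖ := by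
      have := norm_sub_norm_le x w
      rw [hwabs] at this
      linarith
    have hhigh : ‖x - w‖ ≤ ‖x‖ + 1 := by
      have := norm_sub_le x w
      rw [hwabs] at this
      linarith [hr.2]
    have h1r : (0:ℝ) < 1 - r := by linarith [hr.2]
    have hpos : (0:ℝ) < ‖x - w‖ := lt_of_lt_of_le h1r hlow
    have hA : 0 ≤ -Real.log (1 - r) := by
      have := Real.log_nonpos h1r.le (by linarith [hr.1])
      linarith
    have hB : 0 ≤ Real.log (‖x‖ + 1) := Real.log_nonneg (by linarith)
    rw [abs_le]
    constructor
    · have := Real.log_le_log h1r hlow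
      linarith
    · have := Real.log_le_log hpos hhigh
      linarith
  -- integrability of -log(1-r) on (0,1)
  have hlogint : IntegrableOn (fun s : ℝ => -Real.log (1 - s)) (Ioo (0:ℝ) 1) := by
    have h1 : IntervalIntegrable (fun s : ℝ => s ^ (-(2:ℝ)⁻¹)) volume 0 1 :=
      intervalIntegral.intervalIntegrable_rpow' (by norm_num)
    have h2 := h1.comp_sub_left 1
    have h2' : IntegrableOn (fun s : ℝ => (1 - s) ^ (-(2:ℝ)⁻¹)) (Ioo (0:ℝ) 1) := by
      have h3 : IntervalIntegrable (fun s : ℝ => (1 - s) ^ (-(2:ℝ)⁻¹)) volume 1 0 := by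
        simpa using h2
      exact (intervalIntegrable_iff_integrableOn_Ioo_of_le zero_le_one).1 h3.symm
    refine (h2'.const_mul 2).mono' ?_ ?_
    · exact ((Real.measurable_log.comp (measurable_const.sub measurable_id)).neg
        ).aestronglyMeasurable
    · filter_upwards [ae_restrict_mem measurableSet_Ioo] with s hs
      have h1s : (0:ℝ) < 1 - s := by linarith [hs.2]
      have hnn : 0 ≤ -Real.log (1 - s) := by
        have := Real.log_nonpos h1s.le (by linarith [hs.1])
        linarith
      rw [Real.norm_eq_abs, abs_of_nonneg hnn]
      exact neg_log_le_rpow h1s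
  -- the dominating function
  set C : ℝ → ℝ := fun r => -Real.log (1 - r) + Real.log (‖x‖ + 1) with hC
  have hCint : IntegrableOn C (Ioo (0:ℝ) 1) := hlogint.add (integrableOn_const
    (by simp))
  -- integrability of F on the product
  have hFint : Integrable F (μ.prod ν) := by
    rw [integrable_prod_iff hFmeas.aestronglyMeasurable]
    constructor
    · filter_upwards [ae_restrict_mem measurableSet_Ioo] with r hr
      refine (integrable_const (C r)).mono'
        ((hFmeas.comp measurable_prodMk_left).aestronglyMeasurable) ?_
      filter_upwards with θ
      have hb := hbound r hr θ
      rw [hF]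
      simp only [Real.norm_eq_abs, abs_mul]
      calc |r| * |Real.log (‖x - Complex.polarCoord.symm (r, θ)‖)|
          ≤ 1 * (C r) := by
            apply mul_le_mul _ hb (abs_nonneg _) zero_le_one
            rw [abs_of_pos hr.1]; exact hr.2.le
        _ = C r := one_mul _
    · refine (hCint.const_mul (2*Real.pi)).mono'
        ((hFmeas.norm.aestronglyMeasurable.integral_prod_right')) ?_
      filter_upwards [ae_restrict_mem measurableSet_Ioo] with r hr
      have hint1 : Integrable (fun θ => ‖F (r, θ)‖) ν := by
        refine (integrable_const (C r)).mono'
          ((hFmeas.comp measurable_prodMk_left).norm.aestronglyMeasurable) ?_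
        filter_upwards with θ
        have hb := hbound r hr θ
        rw [norm_norm, hF]
        simp only [Real.norm_eq_abs, abs_mul]
        calc |r| * |Real.log (‖x - Complex.polarCoord.symm (r, θ)‖)|
            ≤ 1 * (C r) := by
              apply mul_le_mul _ hb (abs_nonneg _) zero_le_one
              rw [abs_of_pos hr.1]; exact hr.2.le
          _ = C r := one_mul _
      have hnn : 0 ≤ ∫ θ, ‖F (r, θ)‖ ∂ν := integral_nonneg (fun θ => norm_nonneg _)
      rw [Real.norm_eq_abs, abs_of_nonneg hnn]
      have hle : (∫ θ, ‖F (r, θ)‖ ∂ν) ≤ ∫ _θ, C r ∂ν := by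
        apply integral_mono hint1 (integrable_const _)
        intro θ
        have hb := hbound r hr θ
        rw [hF]
        simp only [Real.norm_eq_abs, abs_mul]
        calc |r| * |Real.log (‖x - Complex.polarCoord.symm (r, θ)‖)|
            ≤ 1 * (C r) := by
              apply mul_le_mul _ hb (abs_nonneg _) zero_le_one
              rw [abs_of_pos hr.1]; exact hr.2.le
          _ = C r := one_mul _
      calc (∫ θ, ‖F (r, θ)‖ ∂ν) ≤ ∫ _θ, C r ∂ν := hle
        _ = (2*Real.pi) * C r := by
            rw [hν, integral_const, measureReal_def, Measure.restrict_apply_univ, Real.volume_Ioo,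
              ENNReal.toReal_ofReal (by linarith), smul_eq_mul]
            ring
  -- rewrite the integrand on the polar target as an indicator
  have hTsub : T ⊆ polarCoord.target := by
    rw [hT]
    intro p hp
    exact ⟨hp.1.1, hp.2⟩
  have hball : ∀ p ∈ polarCoord.target,
      p.1 • (ball (0:ℂ) 1).indicator (fun y => Real.log (‖x - y‖))
          (Complex.polarCoord.symm p)
        = T.indicator F p := by
    intro p hp
    have hp1 : 0 < p.1 := hp.1
    by_cases h : p.1 < 1
    · have hmem_ball : Complex.polarCoord.symm p ∈ ball (0:ℂ) 1 := by
        rw [mem_ball, dist_zero_right, Complex.norm_polarCoord_symm,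
          abs_of_pos hp1]
        exact h
      have hmemT : p ∈ T := ⟨⟨hp1, h⟩, hp.2⟩
      rw [indicator_of_mem hmemT, indicator_of_mem hmem_ball, hF, smul_eq_mul]
    · have hnot_ball : Complex.polarCoord.symm p ∉ ball (0:ℂ) 1 := by
        rw [mem_ball, dist_zero_right, Complex.norm_polarCoord_symm,
          abs_of_pos hp1]
        exact h
      have hnotT : p ∉ T := fun hmem => h hmem.1.2
      rw [indicator_of_notMem hnotT, indicator_of_notMem hnot_ball, smul_zero]
  -- inner integral evaluation
  have hinner : ∀ r ∈ Ioo (0:ℝ) 1,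
      (∫ θ, F (r, θ) ∂ν) = r * (2 * Real.pi * Real.log (‖x‖)) := by
    intro r hr
    have hsc : ∀ θ : ℝ, Complex.polarCoord.symm (r, θ) = circleMap 0 r θ := by
      intro θ
      simp [circleMap, Complex.exp_mul_I, Complex.ofReal_cos, Complex.ofReal_sin]
    have h1 : (∫ θ, F (r, θ) ∂ν)
        = r * ∫ θ in Ioo (-Real.pi) Real.pi, Real.log (‖x - circleMap 0 r θ‖) := by
      rw [hν, ← integral_const_mul]
      apply setIntegral_congr_fun measurableSet_Ioo
      intro θ _
      rw [hF]
      simp only [hsc θ]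
    rw [h1]
    congr 1
    have hper : Function.Periodic
        (fun θ : ℝ => Real.log (‖x - circleMap 0 r θ‖)) (2*Real.pi) := by
      intro θ
      simp only [(periodic_circleMap 0 r) θ]
    have hshift := hper.intervalIntegral_add_eq (-Real.pi) 0
    have e1 : -Real.pi + 2*Real.pi = Real.pi := by ring
    have e2 : (0:ℝ) + 2*Real.pi = 2*Real.pi := by ring
    rw [e1, e2] at hshift
    rw [← integral_Ioc_eq_integral_Ioo,
      ← intervalIntegral.integral_of_le (by linarith : -Real.pi ≤ Real.pi), hshift]
    exact circleAvg x hx hr.1 hr.2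
  -- assemble everything
  calc ∫ y in ball (0:ℂ) 1, Real.log (‖x - y‖)
      = ∫ y, (ball (0:ℂ) 1).indicator (fun y => Real.log (‖x - y‖)) y :=
        (integral_indicator measurableSet_ball).symm
    _ = ∫ p in polarCoord.target,
          p.1 • (ball (0:ℂ) 1).indicator (fun y => Real.log (‖x - y‖))
            (Complex.polarCoord.symm p) :=
        (Complex.integral_comp_polarCoord_symm _).symm
    _ = ∫ p in polarCoord.target, T.indicator F p :=
        setIntegral_congr_fun polarCoord.open_target.measurableSet (fun p hp => hball p hp)
    _ = ∫ p in polarCoord.target ∩ T, F p := by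
        rw [setIntegral_indicator (measurableSet_Ioo.prod measurableSet_Ioo)]
    _ = ∫ p in T, F p := by rw [inter_eq_self_of_subset_right hTsub]
    _ = ∫ p, F p ∂(μ.prod ν) := by
        rw [hμ, hν, Measure.prod_restrict, ← Measure.volume_eq_prod, hT]
    _ = ∫ r, (∫ θ, F (r, θ) ∂ν) ∂μ := integral_prod F hFint
    _ = ∫ r in Ioo (0:ℝ) 1, (r * (2 * Real.pi * Real.log (‖x‖))) := by
        rw [hμ]
        exact setIntegral_congr_fun measurableSet_Ioo (fun r hr => hinner r hr)
    _ = (∫ r in Ioo (0:ℝ) 1, r) * (2 * Real.pi * Real.log (‖x‖)) :=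
        integral_mul_const _ _
    _ = Real.pi * Real.log (‖x‖) := by
        have h12 : (∫ r in Ioo (0:ℝ) 1, r) = 1/2 := by
          rw [← integral_Ioc_eq_integral_Ioo,
            ← intervalIntegral.integral_of_le zero_le_one, integral_id]
          norm_num
        rw [h12]
        ring
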